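/- Let k ≥ 1, m, n be natural numbers with m ≥ 2k and n ≥ 2k. For Lebesgue-almost every matrix A ∈ ℝ^{m×n} the following holds: there do NOT exist vectors x, z ∈ ℝ^n, each with at most k nonzero entries, such that the support of x and the support of z are distinct but have nonempty intersection, and |Ax| = |Az| entrywise. That is, two sparse vectors with partially (but not fully) overlapping supports can never produce the same phaseless measurements. -/

import Mathlib

/-!
Fix the sign pattern `ε ∈ {±1}^m` of `Ax` against `Az`. Then `|Ax| = |Az|` is the linear system
`Ax = ε ⊙ Az` in the unknowns `(x, z)` supported on `S, S'`. Its coefficient matrix is polynomial in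
`A`, so it is injective for almost every `A` as soon as it is injective for one `A`; a 0/1 witness,
given by Hall's theorem, exists when `|S| + |S'| ≤ m` and each sign occurs on at least `|S ∩ S'|`
rows. Otherwise one sign occurs on fewer than `|S ∩ S'|` rows, so the other occurs on more than
`|S ∪ S'|` rows, where `A(x ± z) = 0` forces `x = ∓z`. Hence, generically, `|Ax| = |Az|` with
`|supp x| + |supp z| ≤ m` implies `x = ±z`, and the supports coincide.
-/

open MeasureTheory

open Function Matrix MvPolynomial Finset

namespace MvPolynomial

theorem ae_eval_ne_zero_of_fin : ∀ {d : ℕ} {p : MvPolynomial (Fin d) ℝ}, p ≠ 0 →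
    ∀ᵐ x : Fin d → ℝ, eval x p ≠ 0
  | 0, p, hp => by
    obtain ⟨a, rfl⟩ := C_surjective (Fin 0) p
    exact .of_forall fun _ => by simpa using hp
  | d + 1, p, hp => by
    set q := finSuccEquiv ℝ d p
    obtain ⟨i, hi⟩ : ∃ i, q.coeff i ≠ 0 := by
      by_contra! h
      exact hp ((EmbeddingLike.map_eq_zero_iff).mp (Polynomial.ext h))
    have hmeas : MeasurableSet {sy : ℝ × (Fin d → ℝ) | eval (Fin.cons sy.1 sy.2) p ≠ 0} :=
      (isOpen_ne_fun ((continuous_eval p).comp (continuous_fst.finCons continuous_snd))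
        continuous_const).measurableSet
    have hprod : ∀ᵐ sy : ℝ × (Fin d → ℝ), eval (Fin.cons sy.1 sy.2) p ≠ 0 := by
      rw [Measure.volume_eq_prod, Measure.ae_prod_iff_ae_ae hmeas, Measure.ae_ae_comm hmeas]
      filter_upwards [ae_eval_ne_zero_of_fin hi] with y hy
      have hqy : q.map (eval y) ≠ 0 := fun h => hy (by simpa using congr_arg (·.coeff i) h)
      rw [ae_iff]
      simpa [eval_eq_eval_mv_eval'] using (Polynomial.finite_setOfPred_isRoot hqy).measure_zero _
    have hcons := volume_preserving_piFinSuccAbove (fun _ : Fin (d + 1) => ℝ) 0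
    simpa [MeasurableEquiv.piFinSuccAbove_apply, Fin.cons_self_tail] using
      hcons.quasiMeasurePreserving.ae hprod

theorem ae_eval_ne_zero {σ : Type*} [Fintype σ] {p : MvPolynomial σ ℝ} (hp : p ≠ 0) :
    ∀ᵐ x : σ → ℝ, eval x p ≠ 0 := by
  let e := Fintype.equivFin σ
  have hpe : rename e p ≠ 0 := (map_ne_zero_iff _ (rename_injective e e.injective)).mpr hp
  simpa [eval_rename, comp_def, MeasurableEquiv.piCongrLeft_apply_apply] using
    (volume_measurePreserving_piCongrLeft (fun _ => ℝ) e).quasiMeasurePreserving.ae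
      (ae_eval_ne_zero_of_fin hpe)

end MvPolynomial

theorem MeasureTheory.measurePreserving_uncurry {ι κ X : Type*} [Fintype ι] [Fintype κ]
    [MeasurableSpace X] (μ : ι → κ → Measure X) [∀ i j, SigmaFinite (μ i j)] :
    MeasurePreserving (uncurry : (ι → κ → X) → ι × κ → X)
      (Measure.pi fun i => Measure.pi (μ i)) (Measure.pi fun p => μ p.1 p.2) := by
  refine ⟨measurable_uncurry, (Measure.pi_eq fun s hs => ?_).symm⟩
  have hbox : uncurry ⁻¹' Set.univ.pi s = Set.univ.pi fun i => Set.univ.pi fun j => s (i, j) := by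
    ext A; simp
  rw [Measure.map_apply measurable_uncurry (.univ_pi hs), hbox, Measure.pi_pi,
    Fintype.prod_prod_type]
  simp_rw [Measure.pi_pi]

namespace Matrix

theorem mulVec_injective_iff_det_transpose_mul_ne_zero {m n R : Type*} [Fintype m]
    [Fintype n] [DecidableEq n] [Field R] [LinearOrder R] [IsStrictOrderedRing R]
    (A : Matrix m n R) : Injective A.mulVec ↔ (Aᵀ * A).det ≠ 0 := by
  rw [← isUnit_iff_ne_zero, ← isUnit_iff_isUnit_det, ← mulVec_injective_iff_isUnit,
    ← coe_mulVecLin, ← coe_mulVecLin, ← LinearMap.ker_eq_bot, ← LinearMap.ker_eq_bot,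
    ker_mulVecLin_transpose_mul_self]

theorem ae_mulVec_injective_map_eval {σ m n : Type*} [Fintype σ] [Fintype m] [Fintype n]
    [DecidableEq n] (M : Matrix m n (MvPolynomial σ ℝ)) (a₀ : σ → ℝ)
    (h₀ : Injective (M.map (eval a₀)).mulVec) :
    ∀ᵐ a : σ → ℝ, Injective (M.map (eval a)).mulVec := by
  have hdet : ∀ a, eval a (Mᵀ * M).det = ((M.map (eval a))ᵀ * M.map (eval a)).det := fun a => by
    rw [RingHom.map_det, RingHom.mapMatrix_apply, Matrix.map_mul, transpose_map]
  have hne : (Mᵀ * M).det ≠ 0 := fun h => by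
    rw [mulVec_injective_iff_det_transpose_mul_ne_zero, ← hdet, h, map_zero] at h₀
    exact h₀ rfl
  filter_upwards [ae_eval_ne_zero hne] with a ha
  rwa [mulVec_injective_iff_det_transpose_mul_ne_zero, ← hdet]

variable {ι κ R : Type*}

def pairedColumns [Ring R] (A : Matrix ι κ R) (ε : ι → R) (S S' : Finset κ) :
    Matrix ι (S ⊕ S') R :=
  of fun i => Sum.elim (fun j => A i j) (fun j => -(ε i * A i j))

theorem pairedColumns_map {R' : Type*} [Ring R] [Ring R'] (f : R →+* R') (A : Matrix ι κ R)
    (ε : ι → R) (S S' : Finset κ) :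
    (pairedColumns A ε S S').map f = pairedColumns (A.map f) (f ∘ ε) S S' := by
  ext i (j | j) <;> simp [pairedColumns]

theorem pairedColumns_mulVec_sumElim [Fintype κ] [CommRing R] (A : Matrix ι κ R) (ε : ι → R)
    {S S' : Finset κ} {x z : κ → R} (hx : support x ⊆ S) (hz : support z ⊆ S') (i : ι) :
    (pairedColumns A ε S S' *ᵥ Sum.elim (fun j : S => x j) (fun j : S' => z j)) i =
      (A *ᵥ x) i - ε i * (A *ᵥ z) i := by
  have hsum : ∀ (T : Finset κ) (v : κ → R), support v ⊆ T →
      ∑ j : T, A i j * v j = (A *ᵥ v) i := fun T v hv => by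
    rw [sum_coe_sort T fun j => A i j * v j, mulVec, dotProduct]
    exact sum_subset (subset_univ T) fun j _ hj => by
      rw [notMem_support.mp fun h => hj (hv h), mul_zero]
  calc _ = ∑ j : S, A i j * x j - ε i * ∑ j : S', A i j * z j := by
        simp [mulVec, dotProduct, pairedColumns, Fintype.sum_sum_type, mul_sum, mul_assoc,
          sub_eq_add_neg]
    _ = _ := by rw [hsum S x hx, hsum S' z hz]

def SignedPairInjective [Fintype κ] [CommRing R] (A : Matrix ι κ R) (ε : ι → R) (T : Finset ι)
    (S S' : Finset κ) : Prop :=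
  ∀ x z : κ → R, support x ⊆ S → support z ⊆ S' →
    (∀ i ∈ T, (A *ᵥ x) i = ε i * (A *ᵥ z) i) → x = 0 ∧ z = 0

theorem signedPairInjective_iff_mulVec_injective [Fintype κ] [CommRing R] (A : Matrix ι κ R)
    (ε : ι → R) (T : Finset ι) (S S' : Finset κ) :
    SignedPairInjective A ε T S S' ↔
      Injective ((pairedColumns A ε S S').submatrix ((↑) : T → ι) id).mulVec := by
  classical
  rw [← coe_mulVecLin, ← LinearMap.ker_eq_bot, LinearMap.ker_eq_bot']
  simp only [mulVecLin_apply]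
  constructor
  · intro h w hw
    let x : κ → R := fun j => if hj : j ∈ S then w (.inl ⟨j, hj⟩) else 0
    let z : κ → R := fun j => if hj : j ∈ S' then w (.inr ⟨j, hj⟩) else 0
    have hx : support x ⊆ S := fun j hj => by by_contra h'; exact hj (dif_neg h')
    have hz : support z ⊆ S' := fun j hj => by by_contra h'; exact hj (dif_neg h')
    have hwxz : w = Sum.elim (fun j : S => x j) (fun j : S' => z j) := by
      ext (j | j) <;> simp [x, z]
    have hxz := h x z hx hz fun i hi => sub_eq_zero.mp <| by
      rw [← pairedColumns_mulVec_sumElim A ε hx hz, ← hwxz]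
      exact congr_fun hw ⟨i, hi⟩
    rw [hwxz, hxz.1, hxz.2]
    ext (j | j) <;> rfl
  · intro h x z hx hz heq
    have hw := h (Sum.elim (fun j : S => x j) (fun j : S' => z j)) <| funext fun t => by
      change (pairedColumns A ε S S' *ᵥ _) t.1 = 0
      rw [pairedColumns_mulVec_sumElim A ε hx hz, heq t.1 t.2, sub_self]
    constructor <;> ext j
    · by_cases hj : j ∈ S
      · exact congr_fun hw (.inl ⟨j, hj⟩)
      · exact notMem_support.mp fun h => hj (hx h)
    · by_cases hj : j ∈ S'
      · exact congr_fun hw (.inr ⟨j, hj⟩)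
      · exact notMem_support.mp fun h => hj (hz h)

theorem ae_signedPairInjective_of_exists [Fintype ι] [Fintype κ]
    (ε : ι → ℝ) (T : Finset ι) (S S' : Finset κ)
    (h₀ : ∃ A₀ : ι → κ → ℝ, SignedPairInjective (of A₀) ε T S S') :
    ∀ᵐ A : ι → κ → ℝ, SignedPairInjective (of A) ε T S S' := by
  classical
  obtain ⟨A₀, h₀⟩ := h₀
  let M := (pairedColumns (of fun i j => (X (i, j) : MvPolynomial (ι × κ) ℝ)) (C ∘ ε) S S'
    ).submatrix ((↑) : T → ι) id
  have hM : ∀ a : ι × κ → ℝ,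
      M.map (eval a) = (pairedColumns (of (curry a)) ε S S').submatrix (↑) id := fun a => by
    rw [← submatrix_map, pairedColumns_map]
    congr 2 <;> ext <;> simp [curry]
  have hgen := ae_mulVec_injective_map_eval M (uncurry A₀) <| by
    rw [hM, curry_uncurry, ← signedPairInjective_iff_mulVec_injective]
    exact h₀
  filter_upwards [(measurePreserving_uncurry fun _ _ => volume).quasiMeasurePreserving.ae hgen]
    with A hA
  rwa [hM, curry_uncurry, ← signedPairInjective_iff_mulVec_injective] at hA

theorem SignedPairInjective.eq_zero_of_mulVec_eq_zero [Fintype κ]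
    {A : Matrix ι κ ℝ} {ε : ι → ℝ} {T : Finset ι} {S : Finset κ}
    (h : SignedPairInjective A ε T S ∅) {x : κ → ℝ} (hx : support x ⊆ S)
    (h₀ : ∀ i ∈ T, (A *ᵥ x) i = 0) : x = 0 :=
  (h x 0 hx (by simp) fun i hi => by simp [h₀ i hi]).1

end Matrix

theorem Finset.exists_injective_signed_rows {ι κ : Type*} [DecidableEq ι] [DecidableEq κ]
    {S S' : Finset κ} {T P : Finset ι} (hcard : #S + #S' ≤ #T) (hP : #(S ∩ S') ≤ #(T ∩ P))
    (hN : #(S ∩ S') ≤ #(T \ P)) :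
    ∃ f : S ⊕ S' → ι, Injective f ∧ (∀ c, f c ∈ T) ∧ (∀ j : S, ↑j ∈ S' → f (.inl j) ∈ P) ∧
      ∀ j : S', ↑j ∈ S → f (.inr j) ∉ P := by
  let t : S ⊕ S' → Finset ι :=
    Sum.elim (fun j => {i ∈ T | ↑j ∈ S' → i ∈ P}) (fun j => {i ∈ T | ↑j ∈ S → i ∉ P})
  suffices hall : ∀ s : Finset (S ⊕ S'), #s ≤ #(s.biUnion t) by
    obtain ⟨f, hf, hft⟩ := (all_card_le_biUnion_card_iff_exists_injective t).mp hall
    refine ⟨f, hf, fun c => ?_, fun j => (mem_filter.mp (hft (.inl j))).2,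
      fun j => (mem_filter.mp (hft (.inr j))).2⟩
    cases c <;> exact (mem_filter.mp (hft _)).1
  intro s
  by_cases hT : T ⊆ s.biUnion t
  · calc #s ≤ #S + #S' := (card_le_univ s).trans (by simp)
      _ ≤ #T := hcard
      _ ≤ _ := card_le_card hT
  -- A row of `T` missed by every `t c` forces all `c ∈ s` to index `S ∩ S'` from the same side.
  obtain ⟨i₀, hi₀T, hi₀⟩ := not_subset.mp hT
  have hinl : ∀ j, .inl j ∈ s → ↑j ∈ S' ∧ i₀ ∉ P := fun j hj => by
    by_contra h
    exact hi₀ (mem_biUnion.mpr ⟨_, hj, mem_filter.mpr ⟨hi₀T, by tauto⟩⟩)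
  have hinr : ∀ j, .inr j ∈ s → ↑j ∈ S ∧ i₀ ∈ P := fun j hj => by
    by_contra h
    exact hi₀ (mem_biUnion.mpr ⟨_, hj, mem_filter.mpr ⟨hi₀T, by tauto⟩⟩)
  rcases s.eq_empty_or_nonempty with rfl | ⟨c₀, hc₀⟩
  · simp
  have hinj : Set.InjOn (Sum.elim (↑) (↑) : S ⊕ S' → κ) s := by
    rintro (j | j) hj (j' | j') hj' h
    · exact congr_arg _ (Subtype.ext h)
    · exact absurd (hinr j' hj').2 (hinl j hj).2
    · exact absurd (hinr j hj).2 (hinl j' hj').2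
    · exact congr_arg _ (Subtype.ext h)
  have hmaps : Set.MapsTo (Sum.elim (↑) (↑) : S ⊕ S' → κ) s ↑(S ∩ S') := by
    rintro (j | j) hj
    · exact mem_coe.mpr (mem_inter.mpr ⟨j.2, (hinl j hj).1⟩)
    · exact mem_coe.mpr (mem_inter.mpr ⟨(hinr j hj).1, j.2⟩)
  have hside : T ∩ P ⊆ t c₀ ∨ T \ P ⊆ t c₀ := by
    rcases c₀ with j | j
    · exact .inl fun i hi => mem_filter.mpr ⟨(mem_inter.mp hi).1, fun _ => (mem_inter.mp hi).2⟩
    · exact .inr fun i hi => mem_filter.mpr ⟨(mem_sdiff.mp hi).1, fun _ => (mem_sdiff.mp hi).2⟩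
  calc #s ≤ #(S ∩ S') := card_le_card_of_injOn _ hmaps hinj
    _ ≤ #(t c₀) := hside.elim (hP.trans <| card_le_card ·) (hN.trans <| card_le_card ·)
    _ ≤ _ := card_le_card (subset_biUnion_of_mem t hc₀)

def signPattern {ι : Type*} [DecidableEq ι] (P : Finset ι) (i : ι) : ℝ := if i ∈ P then 1 else -1

namespace Matrix

theorem exists_signedPairInjective_of_injective_rows {ι κ : Type*} [DecidableEq ι]
    [Fintype κ] {S S' : Finset κ} {T P : Finset ι} {f : S ⊕ S' → ι} (hf : Injective f)
    (hfT : ∀ c, f c ∈ T)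
    (hfP : ∀ j : S, ↑j ∈ S' → f (.inl j) ∈ P) (hfN : ∀ j : S', ↑j ∈ S → f (.inr j) ∉ P) :
    ∃ A₀ : ι → κ → ℝ, SignedPairInjective (of A₀) (signPattern P) T S S' := by
  classical
  refine ⟨fun i j => if ∃ c, f c = i ∧ Sum.elim (↑) (↑) c = j then 1 else 0, ?_⟩
  intro x z hx hz heq
  have hrow : ∀ c, x (Sum.elim (↑) (↑) c) = signPattern P (f c) * z (Sum.elim (↑) (↑) c) :=
    fun c => by
      simpa only [mulVec, dotProduct, of_apply, hf.eq_iff, exists_eq_left, ite_mul, one_mul,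
        zero_mul, sum_ite_eq, mem_univ, if_true] using heq (f c) (hfT c)
  have hx0 : ∀ j ∉ S, x j = 0 := fun j hj => notMem_support.mp fun h => hj (hx h)
  have hz0 : ∀ j ∉ S', z j = 0 := fun j hj => notMem_support.mp fun h => hj (hz h)
  suffices h : ∀ j, x j = 0 ∧ z j = 0 from ⟨funext fun j => (h j).1, funext fun j => (h j).2⟩
  intro j
  by_cases hjS : j ∈ S <;> by_cases hjS' : j ∈ S'
  · have h₁ := hrow (.inl ⟨j, hjS⟩)
    have h₂ := hrow (.inr ⟨j, hjS'⟩)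
    simp only [Sum.elim_inl, Sum.elim_inr, signPattern, if_pos (hfP ⟨j, hjS⟩ hjS'),
      if_neg (hfN ⟨j, hjS'⟩ hjS)] at h₁ h₂
    constructor <;> linarith
  · have h₁ := hrow (.inl ⟨j, hjS⟩)
    simp only [Sum.elim_inl, hz0 j hjS', mul_zero] at h₁
    exact ⟨h₁, hz0 j hjS'⟩
  · have h₂ := hrow (.inr ⟨j, hjS'⟩)
    simp only [Sum.elim_inr, hx0 j hjS, signPattern] at h₂
    refine ⟨hx0 j hjS, ?_⟩
    split_ifs at h₂ <;> linarith
  · exact ⟨hx0 j hjS, hz0 j hjS'⟩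

theorem ae_forall_signedPairInjective (ι κ : Type*) [Fintype ι] [DecidableEq ι]
    [Fintype κ] [DecidableEq κ] :
    ∀ᵐ A : ι → κ → ℝ, ∀ (S S' : Finset κ) (T P : Finset ι), #S + #S' ≤ #T →
      #(S ∩ S') ≤ #(T ∩ P) → #(S ∩ S') ≤ #(T \ P) →
      SignedPairInjective (of A) (signPattern P) T S S' := by
  simp only [ae_all_iff, Filter.eventually_imp_distrib_left]
  intro S S' T P hcard hP hN
  obtain ⟨f, hf, hfT, hfP, hfN⟩ := exists_injective_signed_rows hcard hP hN
  exact ae_signedPairInjective_of_exists _ T S S'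
    (exists_signedPairInjective_of_injective_rows hf hfT hfP hfN)

end Matrix

theorem ae_eq_or_eq_neg_of_abs_mulVec_eq (ι κ : Type*) [Fintype ι] [Fintype κ] :
    ∀ᵐ A : ι → κ → ℝ, ∀ x z : κ → ℝ,
      (support x).ncard + (support z).ncard ≤ Fintype.card ι →
      (∀ i, |(of A *ᵥ x) i| = |(of A *ᵥ z) i|) → x = z ∨ x = -z := by
  classical
  filter_upwards [ae_forall_signedPairInjective ι κ] with A hA x z hcard habs
  set S := (support x).toFinset
  set S' := (support z).toFinset
  set P : Finset ι := {i | (of A *ᵥ x) i = (of A *ᵥ z) i}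
  have hS : support x ⊆ S := by simp [S]
  have hS' : support z ⊆ S' := by simp [S']
  have hsign : ∀ i, (of A *ᵥ x) i = signPattern P i * (of A *ᵥ z) i := fun i => by
    by_cases hi : i ∈ P
    · rw [signPattern, if_pos hi, one_mul]
      exact (mem_filter.mp hi).2
    · rw [signPattern, if_neg hi, neg_one_mul]
      exact (abs_eq_abs.mp (habs i)).resolve_left fun h => hi (mem_filter.mpr ⟨mem_univ i, h⟩)
  have hcard' : #S + #S' ≤ #(univ : Finset ι) := by
    simpa [S, S', Set.ncard_eq_toFinset_card'] using hcard
  have hsplit : #P + #Pᶜ = #(univ : Finset ι) := by simp [card_add_card_compl]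
  have hunion := card_union_add_card_inter S S'
  have hsupp : ∀ v : κ → ℝ, support v ⊆ support x ∪ support z → support v ⊆ ↑(S ∪ S') :=
    fun v hv => by simpa [S, S'] using hv
  by_cases hP : #(S ∩ S') ≤ #P
  · by_cases hPc : #(S ∩ S') ≤ #Pᶜ
    · obtain ⟨rfl, rfl⟩ := hA S S' univ P hcard' (by simpa using hP)
        (by simpa [← compl_eq_univ_sdiff] using hPc) x z hS hS' fun i _ => hsign i
      exact .inl rfl
    · refine .inl <| sub_eq_zero.mp <|
        (hA (S ∪ S') ∅ P P (by simp; omega) (by simp) (by simp)).eq_zero_of_mulVec_eq_zero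
          (hsupp _ (support_sub x z)) fun i hi => ?_
      rw [mulVec_sub, Pi.sub_apply, sub_eq_zero]
      exact (mem_filter.mp hi).2
  · refine .inr <| eq_neg_of_add_eq_zero_left <|
      (hA (S ∪ S') ∅ Pᶜ P (by simp; omega) (by simp) (by simp)).eq_zero_of_mulVec_eq_zero
        (hsupp _ (support_add x z)) fun i hi => ?_
    rw [mulVec_add, Pi.add_apply, hsign i, signPattern, if_neg (mem_compl.mp hi)]
    ring

theorem partial_support_overlap_impossible_ae_general (k m n : ℕ)
    (hm : 2 * k ≤ m) :
    ∀ᵐ A : Fin m → Fin n → ℝ,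
      ¬ ∃ x z : Fin n → ℝ,
          (Function.support x).ncard ≤ k ∧
          (Function.support z).ncard ≤ k ∧
          Function.support x ≠ Function.support z ∧
          (Function.support x ∩ Function.support z).Nonempty ∧
          (∀ i, |(Matrix.of A).mulVec x i| = |(Matrix.of A).mulVec z i|) := by
  filter_upwards [ae_eq_or_eq_neg_of_abs_mulVec_eq (Fin m) (Fin n)] with A hA
  rintro ⟨x, z, hx, hz, hne, -, habs⟩
  rcases hA x z (by rw [Fintype.card_fin]; omega) habs with rfl | rfl
  exacts [hne rfl, hne (support_neg z)]

/-- For `m ≥ 2k` and `n ≥ 2k`, for Lebesgue-almost every real `m × n` matrix `A`: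
no two `k`-sparse vectors whose supports are distinct but partially overlapping
(nonempty intersection) can produce the same phaseless measurements `|Ax| = |Az|`. -/
theorem partial_support_overlap_impossible_ae (k m n : ℕ) (hk : 1 ≤ k)
    (hm : 2 * k ≤ m) (hn : 2 * k ≤ n) :
    ∀ᵐ A : Fin m → Fin n → ℝ,
      ¬ ∃ x z : Fin n → ℝ,
          (Function.support x).ncard ≤ k ∧
          (Function.support z).ncard ≤ k ∧
          Function.support x ≠ Function.support z ∧
          (Function.support x ∩ Function.support z).Nonempty ∧
          (∀ i, |(Matrix.of A).mulVec x i| = |(Matrix.of A).mulVec z i|) :=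
  partial_support_overlap_impossible_ae_general k m n hm
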